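/- arXiv:2601.21578 — 6 statements merged into one kernel-verified Lean document; each statement's English description precedes it below -/
import Mathlib

section
/- Let T(x) be the unique formal power series with T(0) = 0 satisfying the functional equation T = x + T²/2 + (1/2)((1/(1-T))² - 1)T + (3/2)(1/(1-T))²(T/(1-T))((1/(1-T))² - 1)T + (1/(1-T))⁴((1/(1-T))² - 1)T² + (1/4)(1/(1-T))²((1/(1-T))² - 1)²T². Then the first coefficients of T are: [x¹]T = 1, [x²]T = 3/2, [x³]T = 11, [x⁴]T = 745/8, [x⁵]T = 3333/4. -/
/-!
Multiplying the functional equation by `4 (1 - T)^6` turns it into a polynomial equation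
`p(T) = 0` with `p ∈ ℚ⟦x⟧[Y]` and `p'(0) ≡ 4 (mod x)`. Since
`p(S) - p(T) = (S - T) (p'(T) + k (S - T))` and the second factor is a unit when `S` and `T` have
the same constant term, two such roots modulo `x^n` agree modulo `x^n` (uniqueness in Hensel's
lemma). The polynomial with the claimed coefficients is a root of `p` modulo `x^6`, so it agrees
with `T` up to degree `5`.
-/

open PowerSeries

theorem PowerSeries.X_pow_dvd_sub_of_dvd_eval {R : Type*} [CommRing R]
    {p : Polynomial R⟦X⟧} {S T : R⟦X⟧} {n : ℕ} (hST : constantCoeff S = constantCoeff T)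
    (hp : IsUnit (constantCoeff (p.derivative.eval T)))
    (hS : X ^ n ∣ p.eval S) (hT : X ^ n ∣ p.eval T) : X ^ n ∣ S - T := by
  obtain ⟨k, hk⟩ := p.binomExpansion T (S - T)
  rw [add_sub_cancel] at hk
  have hunit : IsUnit (p.derivative.eval T + k * (S - T)) := by
    rw [isUnit_iff_constantCoeff]
    simpa [sub_eq_zero.2 hST] using hp
  have hfactor : (S - T) * (p.derivative.eval T + k * (S - T)) = p.eval S - p.eval T := by
    rw [hk]; ring
  exact hunit.dvd_mul_right.1 (hfactor ▸ dvd_sub hS hT)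

/-- The functional equation multiplied by `4 (1 - T)^6`, as a polynomial in `y = T`: with
`v = 1 - y` and `w = 1 - v^2` one has `1/(1 - T)^2 - 1 = w / v^2`. -/
noncomputable def treeChildPoly {R : Type*} [CommRing R] (x : R) : Polynomial R :=
  let y : Polynomial R := Polynomial.X
  let v := 1 - y
  let w := 1 - v ^ 2
  4 * (y - Polynomial.C x) * v ^ 6 - 2 * y ^ 2 * v ^ 6 - 2 * y * v ^ 4 * w - 6 * y ^ 2 * v * w
    - 4 * y ^ 2 * w - y ^ 2 * w ^ 2

theorem treeChildPoly_map {R S : Type*} [CommRing R] [CommRing S] (f : R →+* S) (x : R) :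
    (treeChildPoly x).map f = treeChildPoly (f x) := by
  simp [treeChildPoly]

theorem constantCoeff_treeChildPoly_derivative_eval {R : Type*} [CommRing R] {T : R⟦X⟧}
    (h0 : constantCoeff T = 0) : constantCoeff ((treeChildPoly X).derivative.eval T) = 4 := by
  simp [treeChildPoly, Polynomial.derivative_mul, h0, map_ofNat]

theorem treeChildPoly_eval_eq_zero {T : ℚ⟦X⟧} (h0 : constantCoeff T = 0)
    (heq : T = X + C (1/2 : ℚ) * T ^ 2
        + C (1/2 : ℚ) * (((1 - T)⁻¹) ^ 2 - 1) * T
        + C (3/2 : ℚ) * ((1 - T)⁻¹) ^ 2 * (T * (1 - T)⁻¹) * (((1 - T)⁻¹) ^ 2 - 1) * T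
        + ((1 - T)⁻¹) ^ 4 * (((1 - T)⁻¹) ^ 2 - 1) * T ^ 2
        + C (1/4 : ℚ) * ((1 - T)⁻¹) ^ 2 * (((1 - T)⁻¹) ^ 2 - 1) ^ 2 * T ^ 2) :
    (treeChildPoly X).eval T = 0 := by
  set U := (1 - T)⁻¹
  have hpow (k : ℕ) : (1 - T) ^ k * U ^ k = 1 := by
    rw [← mul_pow, PowerSeries.mul_inv_cancel _ (by simp [h0]), one_pow]
  simp only [C_eq_algebraMap] at heq
  simp only [treeChildPoly, Polynomial.eval_sub, Polynomial.eval_mul, Polynomial.eval_pow,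
    Polynomial.eval_X, Polynomial.eval_C, Polynomial.eval_ofNat, Polynomial.eval_one]
  -- `hpow k` absorbs the factor `(1 - T)^k U^k` left after multiplying `heq` by `(1 - T)^6`
  linear_combination (norm := algebra) 4 * (1 - T) ^ 6 * heq
    + (2 * T + T ^ 2) * (1 - T) ^ 4 * hpow 2 - 6 * T ^ 2 * (1 - T) ^ 3 * hpow 3
    - 6 * T ^ 2 * (1 - T) ^ 2 * hpow 4 + 6 * T ^ 2 * (1 - T) * hpow 5 + 5 * T ^ 2 * hpow 6

noncomputable def treeChildTrunc : Polynomial ℚ :=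
  Polynomial.X + Polynomial.C (3/2) * Polynomial.X ^ 2 + Polynomial.C 11 * Polynomial.X ^ 3
    + Polynomial.C (745/8) * Polynomial.X ^ 4 + Polynomial.C (3333/4) * Polynomial.X ^ 5

theorem X_pow_six_dvd_treeChildPoly_eval_trunc :
    Polynomial.X ^ 6 ∣ (treeChildPoly (Polynomial.X : Polynomial ℚ)).eval treeChildTrunc := by
  simp only [treeChildPoly, treeChildTrunc, Polynomial.eval_sub, Polynomial.eval_mul,
    Polynomial.eval_pow, Polynomial.eval_X, Polynomial.eval_C, Polynomial.eval_ofNat,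
    Polynomial.eval_one]
  -- the monomials of degree `< 6` cancel
  polynomial_nf
  repeat' apply dvd_add
  all_goals exact Dvd.dvd.mul_left (pow_dvd_pow _ (by norm_num)) _

theorem X_pow_six_dvd_treeChildPoly_eval_coe_trunc :
    X ^ 6 ∣ (treeChildPoly (X : ℚ⟦X⟧)).eval (treeChildTrunc : ℚ⟦X⟧) := by
  have hcoe := Polynomial.eval₂_hom (p := treeChildPoly (Polynomial.X : Polynomial ℚ))
    Polynomial.coeToPowerSeries.ringHom treeChildTrunc
  rw [← Polynomial.eval_map, treeChildPoly_map] at hcoe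
  simp only [Polynomial.coeToPowerSeries.ringHom_apply, Polynomial.coe_X] at hcoe
  rw [hcoe, ← Polynomial.coe_X, ← Polynomial.coe_pow]
  exact (Polynomial.coeToPowerSeries.ringHom (R := ℚ)).map_dvd
    X_pow_six_dvd_treeChildPoly_eval_trunc

theorem constantCoeff_treeChildTrunc : constantCoeff (treeChildTrunc : ℚ⟦X⟧) = 0 := by
  simp [treeChildTrunc]

/-- If `T` is a formal power series over `ℚ` with `T(0) = 0` satisfying the
functional equation of level-2 tree-child networks, then its first coefficients
are `1, 3/2, 11, 745/8, 3333/4`. -/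
theorem level2_treechild_egf_first_coeffs (T : PowerSeries ℚ)
    (h0 : constantCoeff T = 0)
    (heq : T = X + C (1/2 : ℚ) * T ^ 2
        + C (1/2 : ℚ) * (((1 - T)⁻¹) ^ 2 - 1) * T
        + C (3/2 : ℚ) * ((1 - T)⁻¹) ^ 2 * (T * (1 - T)⁻¹) * (((1 - T)⁻¹) ^ 2 - 1) * T
        + ((1 - T)⁻¹) ^ 4 * (((1 - T)⁻¹) ^ 2 - 1) * T ^ 2
        + C (1/4 : ℚ) * ((1 - T)⁻¹) ^ 2 * (((1 - T)⁻¹) ^ 2 - 1) ^ 2 * T ^ 2) :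
    coeff 1 T = 1 ∧ coeff 2 T = 3/2 ∧ coeff 3 T = 11 ∧
      coeff 4 T = 745/8 ∧ coeff 5 T = 3333/4 := by
  have hunit :
      IsUnit (constantCoeff ((treeChildPoly X).derivative.eval (treeChildTrunc : ℚ⟦X⟧))) := by
    rw [constantCoeff_treeChildPoly_derivative_eval constantCoeff_treeChildTrunc]
    norm_num
  have hdvd : X ^ 6 ∣ T - (treeChildTrunc : ℚ⟦X⟧) :=
    X_pow_dvd_sub_of_dvd_eval (h0.trans constantCoeff_treeChildTrunc.symm) hunit
      (by rw [treeChildPoly_eval_eq_zero h0 heq]; exact dvd_zero _)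
      X_pow_six_dvd_treeChildPoly_eval_coe_trunc
  have hcoeff (n : ℕ) (hn : n < 6) : coeff n T = treeChildTrunc.coeff n := by
    rw [← Polynomial.coeff_coe, ← sub_eq_zero, ← map_sub]
    exact X_pow_dvd_iff.1 hdvd n hn
  refine ⟨?_, ?_, ?_, ?_, ?_⟩ <;> rw [hcoeff _ (by norm_num)] <;>
    simp [treeChildTrunc, Polynomial.coeff_X, Polynomial.coeff_X_pow]
end

section
/- If C(z) = Σ_{n≥1} cₙ zⁿ is a formal power series with c₀ = 0 satisfying C(z) = z·φ(C(z)) for a formal power series φ with φ(0) ≠ 0, then for every n ≥ 1, [zⁿ]C(z) = (1/n)·[z^{n-1}] φ(z)ⁿ. -/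
/-!
Write `C = X ψ` with `ψ = φ(C)`, which is invertible. Since `n [zⁿ] C = [zⁿ⁻¹] C'` and
`C' = C' ψ⁻ⁿ ψⁿ`, while `ψⁿ = φⁿ(C) ≡ ∑_{i<n} [zⁱ]φⁿ · Cⁱ (mod zⁿ)` and
`C' ψ⁻ⁿ Cⁱ = zⁱ C' ψ^{-(n-i)}`, everything reduces to the residue identity
`[zᵖ] C' ψ^{-(p+1)} = δ_{p,0}`. For `p ≥ 1` this holds because
`C' ψ^{-(p+1)} = ψ^{-p} + z ψ' ψ^{-(p+1)}` and `ψ' ψ^{-(p+1)} = -(ψ^{-p})' / p`, whose coefficient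
of `z^{p-1}` is `-[zᵖ] ψ^{-p}`.
-/

open PowerSeries

/-- Composition `φ(C)` of formal power series over `ℚ`, well-defined when `C` has
zero constant term: the `n`-th coefficient is `Σ_{k=0}^{n} [z^k]φ · [z^n](C^k)`. -/
noncomputable def psComp (φ C : PowerSeries ℚ) : PowerSeries ℚ :=
  PowerSeries.mk fun n =>
    ∑ k ∈ Finset.range (n + 1), coeff k φ * coeff n (C ^ k)

section

variable {R : Type*} [CommRing R]

theorem PowerSeries.coeff_mul_eq_of_X_pow_dvd_sub {G H : R⟦X⟧} {m : ℕ}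
    (h : X ^ (m + 1) ∣ G - H) (F : R⟦X⟧) : coeff m (F * G) = coeff m (F * H) := by
  rw [← sub_eq_zero, ← map_sub, ← mul_sub]
  exact X_pow_dvd_iff.mp (dvd_mul_of_dvd_right h F) m (Nat.lt_succ_self m)

theorem PowerSeries.coeff_pow_eq_zero_of_lt {g : R⟦X⟧} (hg : constantCoeff g = 0) {j k : ℕ}
    (h : j < k) : coeff j (g ^ k) = 0 :=
  X_pow_dvd_iff.mp (pow_dvd_pow_of_dvd (X_dvd_iff.mpr hg) k) j h

end

section

variable {k : Type*} [Field k] [CharZero k] {ψ : k⟦X⟧}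

theorem PowerSeries.coeff_derivative_X_mul_mul_inv_pow (hψ : constantCoeff ψ ≠ 0) (p : ℕ) :
    coeff p (d⁄dX k (X * ψ) * ψ⁻¹ ^ (p + 1)) = if p = 0 then 1 else 0 := by
  rcases p with _ | q
  · simp [hψ]
  have hsplit : d⁄dX k (X * ψ) * ψ⁻¹ ^ (q + 2)
      = ψ⁻¹ ^ (q + 1) + X * (d⁄dX k ψ * ψ⁻¹ ^ (q + 2)) := by
    rw [Derivation.leibniz, derivative_X, smul_eq_mul, smul_eq_mul]
    linear_combination ψ⁻¹ ^ (q + 1) * PowerSeries.mul_inv_cancel _ hψ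
  have hderiv : d⁄dX k (ψ⁻¹ ^ (q + 1)) = -((q + 1 : k) • (d⁄dX k ψ * ψ⁻¹ ^ (q + 2))) := by
    rw [derivative_pow, derivative_inv', smul_eq_C_mul, map_add, map_one, map_natCast]
    push_cast
    ring
  have hres := coeff_derivative (ψ⁻¹ ^ (q + 1)) q
  rw [hderiv, map_neg, map_smul, smul_eq_mul] at hres
  have hq : (q + 1 : k) ≠ 0 := Nat.cast_add_one_ne_zero q
  rw [hsplit, map_add, coeff_succ_X_mul, if_neg q.succ_ne_zero]
  exact mul_right_cancel₀ hq (by linear_combination -hres)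

theorem PowerSeries.coeff_derivative_X_mul_mul_inv_pow_mul_pow (hψ : constantCoeff ψ ≠ 0)
    {i m : ℕ} (h : i ≤ m) :
    coeff m (d⁄dX k (X * ψ) * ψ⁻¹ ^ (m + 1) * (X * ψ) ^ i) = if i = m then 1 else 0 := by
  obtain ⟨p, rfl⟩ := Nat.exists_eq_add_of_le h
  have hunit : (ψ⁻¹ * ψ) ^ i = 1 := by rw [PowerSeries.inv_mul_cancel _ hψ, one_pow]
  have hshift : d⁄dX k (X * ψ) * ψ⁻¹ ^ (i + p + 1) * (X * ψ) ^ i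
      = X ^ i * (d⁄dX k (X * ψ) * ψ⁻¹ ^ (p + 1)) := by
    linear_combination X ^ i * d⁄dX k (X * ψ) * ψ⁻¹ ^ (p + 1) * hunit
  rw [hshift, add_comm i p, coeff_X_pow_mul', if_pos (Nat.le_add_left i p), Nat.add_sub_cancel,
    coeff_derivative_X_mul_mul_inv_pow hψ]
  simp

theorem PowerSeries.coeff_derivative_X_mul_mul_inv_pow_mul_sum (hψ : constantCoeff ψ ≠ 0)
    (a : ℕ → k) (m : ℕ) :
    coeff m (d⁄dX k (X * ψ) * ψ⁻¹ ^ (m + 1) * ∑ i ∈ Finset.range (m + 1), C (a i) * (X * ψ) ^ i)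
      = a m := by
  simp_rw [Finset.mul_sum, mul_left_comm _ (C _), map_sum, coeff_C_mul]
  rw [Finset.sum_congr rfl fun i hi => by
    rw [coeff_derivative_X_mul_mul_inv_pow_mul_pow hψ (Finset.mem_range_succ_iff.mp hi)]]
  simp

end

section

variable {g : ℚ⟦X⟧}

@[simp]
theorem coeff_psComp (f : ℚ⟦X⟧) (n : ℕ) :
    coeff n (psComp f g) = ∑ k ∈ Finset.range (n + 1), coeff k f * coeff n (g ^ k) :=
  coeff_mk _ _

theorem constantCoeff_psComp (f : ℚ⟦X⟧) : constantCoeff (psComp f g) = constantCoeff f := by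
  rw [← coeff_zero_eq_constantCoeff_apply, coeff_psComp]
  simp

theorem psComp_eq_subst (hg : constantCoeff g = 0) (f : ℚ⟦X⟧) : psComp f g = subst g f := by
  ext n
  rw [coeff_psComp, coeff_subst' (HasSubst.of_constantCoeff_zero' hg)]
  refine (finsum_eq_sum_of_support_subset _ fun d hd => ?_).symm
  by_contra hdn
  exact hd (mul_eq_zero_of_right _ (coeff_pow_eq_zero_of_lt hg (by simpa using hdn)))

theorem psComp_pow (hg : constantCoeff g = 0) (f : ℚ⟦X⟧) (n : ℕ) :
    psComp (f ^ n) g = psComp f g ^ n := by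
  rw [psComp_eq_subst hg, psComp_eq_subst hg, subst_pow (HasSubst.of_constantCoeff_zero' hg)]

theorem X_pow_dvd_psComp_sub_sum (hg : constantCoeff g = 0) (f : ℚ⟦X⟧) (M : ℕ) :
    X ^ M ∣ psComp f g - ∑ k ∈ Finset.range M, C (coeff k f) * g ^ k := by
  refine X_pow_dvd_iff.mpr fun j hj => ?_
  rw [map_sub, sub_eq_zero, coeff_psComp, map_sum]
  simp only [coeff_C_mul]
  refine Finset.sum_subset (Finset.range_subset_range.mpr hj) fun k _ hkj => ?_
  rw [coeff_pow_eq_zero_of_lt hg (by simpa using hkj), mul_zero]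

end

/-- Lagrange inversion formula: if `C(z) = z·φ(C(z))` with `C(0) = 0` and
`φ(0) ≠ 0`, then `[zⁿ]C = (1/n)·[z^{n-1}] φⁿ` for all `n ≥ 1`. -/
theorem lagrange_inversion (C φ : PowerSeries ℚ)
    (hC0 : constantCoeff C = 0) (hφ0 : constantCoeff φ ≠ 0)
    (heq : C = X * psComp φ C) :
    ∀ n : ℕ, 1 ≤ n → coeff n C = (1 / (n : ℚ)) * coeff (n - 1) (φ ^ n) := by
  intro n hn
  obtain ⟨m, rfl⟩ := Nat.exists_eq_add_of_le' hn
  have htrunc := X_pow_dvd_psComp_sub_sum hC0 (φ ^ (m + 1)) (m + 1)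
  rw [psComp_pow hC0] at htrunc
  have hψ : constantCoeff (psComp φ C) ≠ 0 := by rwa [constantCoeff_psComp]
  generalize psComp φ C = ψ at heq htrunc hψ
  subst heq
  have hcoeff : coeff m (d⁄dX ℚ (X * ψ)) = coeff m (φ ^ (m + 1)) := calc
    _ = coeff m (d⁄dX ℚ (X * ψ) * ψ⁻¹ ^ (m + 1) * ψ ^ (m + 1)) := by
      rw [mul_assoc, ← mul_pow, PowerSeries.inv_mul_cancel _ hψ, one_pow, mul_one]
    _ = _ := coeff_mul_eq_of_X_pow_dvd_sub htrunc _
    _ = _ := coeff_derivative_X_mul_mul_inv_pow_mul_sum hψ _ m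
  rw [coeff_derivative] at hcoeff
  rw [Nat.add_sub_cancel, ← hcoeff]
  push_cast
  field_simp
end

section
/- Let T be the unique formal power series with T(0) = 0 satisfying T = x·φ(T) where φ(z) = -4(z-1)⁶/(2z⁷ - 18z⁶ + 67z⁵ - 126z⁴ + 124z³ - 70z² + 30z - 4). Then for all n ≥ 1, n!·[xⁿ]T ≥ 0, i.e., the coefficients tₙ = n!·[xⁿ]T are nonnegative. -/
/-!
Writing `u = z / (1 - z)`, one has `1 / φ(z) = 1 - A(z)` with
`A(z) = z · (6 + 26u + 84u² + 130u³ + 99u⁴ + 36u⁵ + 5u⁶) / 4`,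
a series with nonnegative coefficients and no constant term. Hence `φ = 1 + φ · A` has nonnegative
coefficients, and then the coefficients of `T = x · φ(T)` are nonnegative by strong induction.
-/

open PowerSeries

open scoped PowerSeries

namespace PowerSeries

section Semiring

variable (R : Type*) [Semiring R] [PartialOrder R] [IsOrderedRing R]

def nonnegSubsemiring : Subsemiring R⟦X⟧ where
  carrier := {f | ∀ n, 0 ≤ coeff n f}
  zero_mem' n := by simp
  one_mem' n := by rw [coeff_one]; split_ifs <;> simp
  add_mem' hf hg n := by rw [map_add]; exact add_nonneg (hf n) (hg n)
  mul_mem' hf hg n := by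
    rw [coeff_mul]
    exact Finset.sum_nonneg fun p _ => mul_nonneg (hf p.1) (hg p.2)

variable {R}

theorem X_mem_nonnegSubsemiring : (X : R⟦X⟧) ∈ nonnegSubsemiring R := fun n => by
  rw [coeff_X]; split_ifs <;> simp

theorem C_mem_nonnegSubsemiring {c : R} (hc : 0 ≤ c) : C c ∈ nonnegSubsemiring R := fun n => by
  rw [coeff_C]; split_ifs <;> simp [hc]

theorem mk_mem_nonnegSubsemiring {f : ℕ → R} (hf : ∀ n, 0 ≤ f n) :
    mk f ∈ nonnegSubsemiring R := fun n => by
  rw [coeff_mk]; exact hf n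

theorem trunc_mem_nonnegSubsemiring {f : R⟦X⟧} {n : ℕ} (hf : ∀ i < n, 0 ≤ coeff i f) :
    (trunc n f : R⟦X⟧) ∈ nonnegSubsemiring R := fun i => by
  rw [Polynomial.coeff_coe, coeff_trunc]; split_ifs with hi
  exacts [hf i hi, le_rfl]

end Semiring

section CommSemiring

variable {R : Type*} [CommSemiring R] [PartialOrder R] [IsOrderedRing R]

theorem coeff_pow_nonneg {f : R⟦X⟧} {n : ℕ} (hf : ∀ i ≤ n, 0 ≤ coeff i f) (k : ℕ) :
    0 ≤ coeff n (f ^ k) := by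
  have htrunc : (trunc (n + 1) f : R⟦X⟧) ^ k ∈ nonnegSubsemiring R :=
    pow_mem (trunc_mem_nonnegSubsemiring fun i hi => hf i (Nat.lt_succ_iff.mp hi)) k
  rw [← coeff_coe_trunc_of_lt (Nat.lt_succ_self n), ← trunc_trunc_pow, coeff_coe_trunc_of_lt
    (Nat.lt_succ_self n)]
  exact htrunc n

end CommSemiring

section CommRing

variable {R : Type*} [CommRing R] [PartialOrder R] [IsOrderedRing R]

/-- Since `φ = 1 + φ A` and `A` has no constant term, `[xⁿ]φ` only involves `[xⁱ]φ` with `i < n`. -/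
theorem mem_nonnegSubsemiring_of_mul_one_sub_eq_one {φ A : R⟦X⟧}
    (hA : A ∈ nonnegSubsemiring R) (hA0 : constantCoeff A = 0) (h : φ * (1 - A) = 1) :
    φ ∈ nonnegSubsemiring R := by
  have hφ : φ = 1 + φ * A := by linear_combination h
  intro n
  induction n using Nat.strong_induction_on with
  | _ n ih =>
    rw [hφ, map_add, coeff_mul]
    refine add_nonneg ((nonnegSubsemiring R).one_mem n) (Finset.sum_nonneg fun p hp => ?_)
    rcases Nat.eq_zero_or_pos p.2 with hp2 | hp2
    · rw [hp2, coeff_zero_eq_constantCoeff_apply, hA0, mul_zero]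
    · have hp1 : p.1 < n := by
        have := Finset.HasAntidiagonal.mem_antidiagonal.mp hp
        omega
      exact mul_nonneg (ih p.1 hp1) (hA p.2)

end CommRing

end PowerSeries

theorem coeff_psComp_nonneg {φ C : ℚ⟦X⟧} {n : ℕ} (hφ : φ ∈ nonnegSubsemiring ℚ)
    (hC : ∀ i ≤ n, 0 ≤ coeff i C) : 0 ≤ coeff n (psComp φ C) := by
  rw [psComp, coeff_mk]
  exact Finset.sum_nonneg fun k _ => mul_nonneg (hφ k) (coeff_pow_nonneg hC k)

theorem coeff_nonneg_of_eq_X_mul_psComp {φ T : ℚ⟦X⟧} (hφ : φ ∈ nonnegSubsemiring ℚ)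
    (hT : T = X * psComp φ T) (n : ℕ) : 0 ≤ coeff n T := by
  induction n using Nat.strong_induction_on with
  | _ n ih =>
    rw [hT]
    rcases n with _ | n
    · simp
    · rw [coeff_succ_X_mul]
      exact coeff_psComp_nonneg hφ fun i hi => ih i (Nat.lt_succ_of_le hi)

-- `w` plays the role of `(1 - x)⁻¹`, so that `x * w` is `u` and `c` is `1 / 4`.
theorem one_sub_mul_neg_four_mul_sub_one_pow_six {R : Type*} [CommRing R] {x w c : R}
    (hw : w * (1 - x) = 1) (hc : 4 * c = 1) :
    (1 - c * x * (6 + 26 * (x * w) + 84 * (x * w) ^ 2 + 130 * (x * w) ^ 3 + 99 * (x * w) ^ 4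
        + 36 * (x * w) ^ 5 + 5 * (x * w) ^ 6)) * (-4 * (x - 1) ^ 6)
      = 2*x^7 - 18*x^6 + 67*x^5 - 126*x^4 + 124*x^3 - 70*x^2 + 30*x - 4 := by
  grind

theorem treeChild_phi_mem_nonnegSubsemiring :
    (-4 * (X - 1) ^ 6) * (2*X^7 - 18*X^6 + 67*X^5 - 126*X^4 + 124*X^3 - 70*X^2 + 30*X - 4)⁻¹
      ∈ nonnegSubsemiring ℚ := by
  set D : ℚ⟦X⟧ := 2*X^7 - 18*X^6 + 67*X^5 - 126*X^4 + 124*X^3 - 70*X^2 + 30*X - 4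
  set u : ℚ⟦X⟧ := X * mk 1
  set A : ℚ⟦X⟧ := C 4⁻¹ * X * (6 + 26 * u + 84 * u ^ 2 + 130 * u ^ 3 + 99 * u ^ 4
    + 36 * u ^ 5 + 5 * u ^ 6)
  have hc : (4 : ℚ⟦X⟧) * C 4⁻¹ = 1 := by rw [← map_ofNat C, ← map_mul]; norm_num
  have hD : (1 - A) * (-4 * (X - 1) ^ 6) = D :=
    one_sub_mul_neg_four_mul_sub_one_pow_six (mk_one_mul_one_sub_eq_one ℚ) hc
  have hD0 : constantCoeff D ≠ 0 := by simp [D, map_ofNat]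
  refine mem_nonnegSubsemiring_of_mul_one_sub_eq_one (A := A) ?_ (by simp [A]) ?_
  · have hu : u ∈ nonnegSubsemiring ℚ :=
      mul_mem X_mem_nonnegSubsemiring (mk_mem_nonnegSubsemiring fun _ => zero_le_one)
    have h4 : C 4⁻¹ ∈ nonnegSubsemiring ℚ := C_mem_nonnegSubsemiring (by norm_num)
    apply_rules (transparency := .reducible) [add_mem, mul_mem, pow_mem, ofNat_mem,
      X_mem_nonnegSubsemiring]
  · calc -4 * (X - 1) ^ 6 * D⁻¹ * (1 - A) = D⁻¹ * ((1 - A) * (-4 * (X - 1) ^ 6)) := by ring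
      _ = 1 := by rw [hD, PowerSeries.inv_mul_cancel D hD0]

theorem level2_treechild_coeffs_nonneg_general (T : PowerSeries ℚ)
    (heq : T = X * psComp ((-4 * (X - 1) ^ 6) *
      (2*X^7 - 18*X^6 + 67*X^5 - 126*X^4 + 124*X^3 - 70*X^2 + 30*X - 4)⁻¹) T) :
    ∀ n : ℕ, 1 ≤ n → 0 ≤ (Nat.factorial n : ℚ) * coeff n T :=
  fun n _ => mul_nonneg (Nat.cast_nonneg _)
    (coeff_nonneg_of_eq_X_mul_psComp treeChild_phi_mem_nonnegSubsemiring heq n)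

/-- If `T` is the formal power series with `T(0) = 0` satisfying `T = x·φ(T)` where
`φ(z) = -4(z-1)⁶/(2z⁷ - 18z⁶ + 67z⁵ - 126z⁴ + 124z³ - 70z² + 30z - 4)`, then all
coefficients `tₙ = n!·[xⁿ]T` are nonnegative. -/
theorem level2_treechild_coeffs_nonneg (T : PowerSeries ℚ)
    (h0 : constantCoeff T = 0)
    (heq : T = X * psComp ((-4 * (X - 1) ^ 6) *
      (2*X^7 - 18*X^6 + 67*X^5 - 126*X^4 + 124*X^3 - 70*X^2 + 30*X - 4)⁻¹) T) :
    ∀ n : ℕ, 1 ≤ n → 0 ≤ (Nat.factorial n : ℚ) * coeff n T :=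
  level2_treechild_coeffs_nonneg_general T heq
end

section
/- Let φ(z) = -4(z-1)⁶/(2z⁷ - 18z⁶ + 67z⁵ - 126z⁴ + 124z³ - 70z² + 30z - 4) and let ρ ≈ 0.0787573489 satisfy 0.078 < ρ < 0.079 with ρ = τ/φ(τ) for the root τ ∈ (0.122, 0.123) of φ(z) = zφ'(z). Then the growth rate γ = 1/(ρe) satisfies 4.67 < γ < 4.68. -/
/-!
Writing `τ = 0.1225 + s` with `|s| < 0.0005`, the polynomial inequalities that pin
`ρ = τ/φ(τ)` to `(0.0787, 0.07877)` follow from the crude bounds `|s ^ k| ≤ 0.0005 ^ k`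
alone: `z/φ(z)` is stationary at the root of `φ = zφ'`, so the linear term in `s` is negligible.
Then `γ = 1/(ρe)` follows from `e ≈ 2.718281828`.
-/

open Set Real

lemma pow_mem_Icc_of_abs_le {s r : ℝ} (h : |s| ≤ r) (k : ℕ) : s ^ k ∈ Icc (-r ^ k) (r ^ k) :=
  abs_le.mp (abs_pow s k ▸ pow_le_pow_left₀ (abs_nonneg s) h k)

def phiDenom (z : ℝ) : ℝ :=
  2*z^7 - 18*z^6 + 67*z^5 - 126*z^4 + 124*z^3 - 70*z^2 + 30*z - 4

lemma neg_mul_phiDenom_bounds {τ : ℝ} (hτ : τ ∈ Ioo (0.122 : ℝ) 0.123) :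
    0.0787 * (4 * (1 - τ) ^ 6) < -(τ * phiDenom τ) ∧
      -(τ * phiDenom τ) < 0.07877 * (4 * (1 - τ) ^ 6) := by
  obtain ⟨s, rfl⟩ : ∃ s, τ = 0.1225 + s := ⟨τ - 0.1225, by ring⟩
  have hs : |s| ≤ 0.0005 := abs_le.mpr ⟨by linarith [hτ.1], by linarith [hτ.2]⟩
  have h := pow_mem_Icc_of_abs_le hs
  unfold phiDenom
  constructor <;> ring_nf <;>
    linarith [h 1 |>.1, h 1 |>.2, h 2 |>.1, h 2 |>.2, h 3 |>.1, h 3 |>.2, h 4 |>.1, h 4 |>.2,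
      h 5 |>.1, h 5 |>.2, h 6 |>.1, h 6 |>.2, h 7 |>.1, h 7 |>.2, h 8 |>.1, h 8 |>.2]

lemma div_mem_Ioo_of_phi {φ : ℝ → ℝ} (hφ : ∀ z, φ z = -4 * (z - 1) ^ 6 / phiDenom z) {τ : ℝ}
    (hτ : τ ∈ Ioo (0.122 : ℝ) 0.123) : τ / φ τ ∈ Ioo (0.0787 : ℝ) 0.07877 := by
  have hpos : 0 < 4 * (1 - τ) ^ 6 :=
    mul_pos four_pos (pow_pos (by linarith [hτ.2]) 6)
  have hρ : τ / φ τ = -(τ * phiDenom τ) / (4 * (1 - τ) ^ 6) := by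
    rw [hφ, div_div_eq_mul_div, ← neg_div_neg_eq]
    ring_nf
  obtain ⟨hlo, hhi⟩ := neg_mul_phiDenom_bounds hτ
  rw [hρ]
  exact ⟨(lt_div_iff₀ hpos).mpr hlo, (div_lt_iff₀ hpos).mpr hhi⟩

lemma one_div_mul_exp_one_bounds {ρ : ℝ} (hρ : ρ ∈ Ioo (0.0787 : ℝ) 0.07877) :
    4.67 < 1 / (ρ * exp 1) ∧ 1 / (ρ * exp 1) < 4.68 := by
  obtain ⟨hlo, hhi⟩ := hρ
  have he_lo := exp_one_gt_d9
  have he_hi := exp_one_lt_d9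
  have hpos : 0 < ρ * exp 1 := by positivity
  constructor
  · rw [lt_div_iff₀ hpos]
    nlinarith [mul_pos (sub_pos.mpr hhi) (sub_pos.mpr he_hi)]
  · rw [div_lt_iff₀ hpos]
    nlinarith [mul_pos (sub_pos.mpr hlo) (sub_pos.mpr he_lo)]

theorem growth_rate_bounds_general (φ : ℝ → ℝ)
    (hφ : ∀ z : ℝ, φ z = (-4*(z-1)^6) /
      (2*z^7 - 18*z^6 + 67*z^5 - 126*z^4 + 124*z^3 - 70*z^2 + 30*z - 4))
    (τ ρ : ℝ) (hτ : τ ∈ Set.Ioo (0.122 : ℝ) 0.123)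
    (hρdef : ρ = τ / φ τ) :
    4.67 < 1 / (ρ * Real.exp 1) ∧ 1 / (ρ * Real.exp 1) < 4.68 :=
  one_div_mul_exp_one_bounds (hρdef ▸ div_mem_Ioo_of_phi hφ hτ)

/-- If `ρ = τ/φ(τ)` for the root `τ ∈ (0.122, 0.123)` of `φ(z) = z·φ'(z)`, with
`φ(z) = -4(z-1)⁶/(2z⁷ - 18z⁶ + 67z⁵ - 126z⁴ + 124z³ - 70z² + 30z - 4)`, and
`0.078 < ρ < 0.079`, then the growth rate `γ = 1/(ρe)` satisfies `4.67 < γ < 4.68`. -/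
theorem growth_rate_bounds (φ : ℝ → ℝ)
    (hφ : ∀ z : ℝ, φ z = (-4*(z-1)^6) /
      (2*z^7 - 18*z^6 + 67*z^5 - 126*z^4 + 124*z^3 - 70*z^2 + 30*z - 4))
    (τ ρ : ℝ) (hτ : τ ∈ Set.Ioo (0.122 : ℝ) 0.123)
    (hroot : φ τ = τ * deriv φ τ)
    (hρdef : ρ = τ / φ τ)
    (hρ : 0.078 < ρ ∧ ρ < 0.079) :
    4.67 < 1 / (ρ * Real.exp 1) ∧ 1 / (ρ * Real.exp 1) < 4.68 :=
  growth_rate_bounds_general φ hφ τ ρ hτ hρdef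
end

section
/- Let φ(z) = -4(z-1)⁶/(2z⁷ - 18z⁶ + 67z⁵ - 126z⁴ + 124z³ - 70z² + 30z - 4) and let τ ∈ (0.122, 0.123) satisfy φ(τ) = τ·φ'(τ). Then φ''(τ) > 0 and the constant c = sqrt(φ(τ)/φ''(τ)) satisfies 0.066 < c < 0.067. -/
/-!
Write `φ = P / Q`. Then `φ' = (P'Q - PQ') / Q²` and `φ'' = B / Q³` for an explicit polynomial `B`,
so the root condition becomes `PQ = τ (P'Q - PQ')` and `φ(τ) / φ''(τ) = PQ² / B`. Each claim
is then the sign of an explicit polynomial on a short interval `(a, a + h)`: `Q < 0` and `B < 0`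
there, the root condition has no solution below `0.1226`, and `0.066² B < PQ² < 0.067² B`
(the upper bound only above `0.1225`). Each sign is certified by expanding in `u = z - a` and
using `0 < u ^ (k + 1) ≤ h ^ k u`.
-/

open Filter Topology Set

theorem deriv_deriv_div {𝕜 : Type*} [NontriviallyNormedField 𝕜] {p q p' q' p'' q'' : 𝕜 → 𝕜}
    {x : 𝕜} (hp : ∀ y, HasDerivAt p (p' y) y) (hq : ∀ y, HasDerivAt q (q' y) y)
    (hp' : HasDerivAt p' (p'' x) x) (hq' : HasDerivAt q' (q'' x) x) (hqx : q x ≠ 0) :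
    deriv (deriv fun y => p y / q y) x =
      ((p'' x * q x - p x * q'' x) * q x - 2 * (p' x * q x - p x * q' x) * q' x) / q x ^ 3 := by
  have hderiv : deriv (fun y => p y / q y) =ᶠ[𝓝 x]
      fun y => (p' y * q y - p y * q' y) / q y ^ 2 :=
    ((hq x).continuousAt.eventually_ne hqx).mono fun y hy => ((hp y).div (hq y) hy).deriv
  have hnum : HasDerivAt (fun y => p' y * q y - p y * q' y) (p'' x * q x - p x * q'' x) x :=
    ((hp'.mul (hq x)).sub ((hp x).mul hq')).congr_deriv (by ring)
  rw [hderiv.deriv_eq, (hnum.fun_div ((hq x).fun_pow 2) (pow_ne_zero 2 hqx)).deriv]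
  field_simp
  ring

theorem exists_eq_add_of_mem_Ioo {a b z : ℝ} (hz : z ∈ Ioo a b) :
    ∃ u, 0 < u ∧ u < b - a ∧ z = a + u :=
  ⟨z - a, sub_pos.2 hz.1, sub_lt_sub_right hz.2 a, (add_sub_cancel a z).symm⟩

theorem pow_succ_le_pow_mul_of_le {u c : ℝ} (hu : 0 ≤ u) (huc : u ≤ c) (k : ℕ) :
    u ^ (k + 1) ≤ c ^ k * u := by
  rw [pow_succ]; exact mul_le_mul_of_nonneg_right (pow_le_pow_left₀ hu huc k) hu

noncomputable section

def phiNum (z : ℝ) : ℝ := -4 * (z - 1) ^ 6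
def phiDen (z : ℝ) : ℝ :=
  2*z^7 - 18*z^6 + 67*z^5 - 126*z^4 + 124*z^3 - 70*z^2 + 30*z - 4
def phiNum' (z : ℝ) : ℝ := -24 * (z - 1) ^ 5
def phiDen' (z : ℝ) : ℝ :=
  14*z^6 - 108*z^5 + 335*z^4 - 504*z^3 + 372*z^2 - 140*z + 30
def phiNum'' (z : ℝ) : ℝ := -120 * (z - 1) ^ 4
def phiDen'' (z : ℝ) : ℝ :=
  84*z^5 - 540*z^4 + 1340*z^3 - 1512*z^2 + 744*z - 140
def phiDerivNum (z : ℝ) : ℝ := phiNum' z * phiDen z - phiNum z * phiDen' z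
def phiDeriv2Num (z : ℝ) : ℝ :=
  (phiNum'' z * phiDen z - phiNum z * phiDen'' z) * phiDen z - 2 * phiDerivNum z * phiDen' z

theorem hasDerivAt_phiNum (x : ℝ) : HasDerivAt phiNum (phiNum' x) x := by
  have h : deriv phiNum x = phiNum' x := by unfold phiNum phiNum'; simp; ring
  exact h ▸ (by unfold phiNum; fun_prop : Differentiable ℝ phiNum).differentiableAt.hasDerivAt

theorem hasDerivAt_phiNum' (x : ℝ) : HasDerivAt phiNum' (phiNum'' x) x := by
  have h : deriv phiNum' x = phiNum'' x := by unfold phiNum' phiNum''; simp; ring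
  exact h ▸ (by unfold phiNum'; fun_prop : Differentiable ℝ phiNum').differentiableAt.hasDerivAt

theorem hasDerivAt_phiDen (x : ℝ) : HasDerivAt phiDen (phiDen' x) x := by
  have h : deriv phiDen x = phiDen' x := by
    unfold phiDen phiDen'; simp (disch := fun_prop); ring
  exact h ▸ (by unfold phiDen; fun_prop : Differentiable ℝ phiDen).differentiableAt.hasDerivAt

theorem hasDerivAt_phiDen' (x : ℝ) : HasDerivAt phiDen' (phiDen'' x) x := by
  have h : deriv phiDen' x = phiDen'' x := by
    unfold phiDen' phiDen''; simp (disch := fun_prop); ring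
  exact h ▸ (by unfold phiDen'; fun_prop : Differentiable ℝ phiDen').differentiableAt.hasDerivAt

theorem phiDen_neg {z : ℝ} (hz : z ∈ Ioo 0.122 0.123) : phiDen z < 0 := by
  obtain ⟨u, hu0, hu, rfl⟩ := exists_eq_add_of_mem_Ioo hz
  have h := fun k => pow_succ_le_pow_mul_of_le hu0.le hu.le k
  unfold phiDen
  linarith [h 1, h 2, h 3, h 4, h 5, h 6, pow_pos hu0 2, pow_pos hu0 3, pow_pos hu0 4,
    pow_pos hu0 5, pow_pos hu0 6, pow_pos hu0 7]

theorem phiDeriv2Num_neg {z : ℝ} (hz : z ∈ Ioo 0.122 0.123) : phiDeriv2Num z < 0 := by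
  obtain ⟨u, hu0, hu, rfl⟩ := exists_eq_add_of_mem_Ioo hz
  have h := fun k => pow_succ_le_pow_mul_of_le hu0.le hu.le k
  unfold phiDeriv2Num phiDerivNum phiNum phiNum' phiNum'' phiDen phiDen' phiDen''
  linarith [h 1, h 2, h 3, h 4, h 5, h 6, h 7, h 8, h 9, h 10, h 11, h 12, h 13, h 14, h 15,
    h 16, h 17, pow_pos hu0 2, pow_pos hu0 3, pow_pos hu0 4, pow_pos hu0 5, pow_pos hu0 6,
    pow_pos hu0 7, pow_pos hu0 8, pow_pos hu0 9, pow_pos hu0 10, pow_pos hu0 11, pow_pos hu0 12,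
    pow_pos hu0 13, pow_pos hu0 14, pow_pos hu0 15, pow_pos hu0 16, pow_pos hu0 17,
    pow_pos hu0 18]

theorem phiDerivNum_mul_lt {z : ℝ} (hz : z ∈ Ioo 0.122 0.1226) :
    z * phiDerivNum z < phiNum z * phiDen z := by
  obtain ⟨u, hu0, hu, rfl⟩ := exists_eq_add_of_mem_Ioo hz
  have h := fun k => pow_succ_le_pow_mul_of_le hu0.le hu.le k
  unfold phiDerivNum phiNum phiNum' phiDen phiDen'
  linarith [h 1, h 2, h 3, h 4, h 5, h 6, h 7, h 8, h 9, h 10, h 11, h 12, pow_pos hu0 2,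
    pow_pos hu0 3, pow_pos hu0 4, pow_pos hu0 5, pow_pos hu0 6, pow_pos hu0 7, pow_pos hu0 8,
    pow_pos hu0 9, pow_pos hu0 10, pow_pos hu0 11, pow_pos hu0 12, pow_pos hu0 13]

theorem phiNum_mul_phiDen_sq_lt {z : ℝ} (hz : z ∈ Ioo 0.122 0.123) :
    phiNum z * phiDen z ^ 2 < 0.066 ^ 2 * phiDeriv2Num z := by
  obtain ⟨u, hu0, hu, rfl⟩ := exists_eq_add_of_mem_Ioo hz
  have h := fun k => pow_succ_le_pow_mul_of_le hu0.le hu.le k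
  unfold phiDeriv2Num phiDerivNum phiNum phiNum' phiNum'' phiDen phiDen' phiDen''
  linarith [h 1, h 2, h 3, h 4, h 5, h 6, h 7, h 8, h 9, h 10, h 11, h 12, h 13, h 14, h 15,
    h 16, h 17, h 18, h 19, pow_pos hu0 2, pow_pos hu0 3, pow_pos hu0 4, pow_pos hu0 5,
    pow_pos hu0 6, pow_pos hu0 7, pow_pos hu0 8, pow_pos hu0 9, pow_pos hu0 10, pow_pos hu0 11,
    pow_pos hu0 12, pow_pos hu0 13, pow_pos hu0 14, pow_pos hu0 15, pow_pos hu0 16,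
    pow_pos hu0 17, pow_pos hu0 18, pow_pos hu0 19, pow_pos hu0 20]

theorem lt_phiNum_mul_phiDen_sq {z : ℝ} (hz : z ∈ Ioo 0.1225 0.123) :
    0.067 ^ 2 * phiDeriv2Num z < phiNum z * phiDen z ^ 2 := by
  obtain ⟨u, hu0, hu, rfl⟩ := exists_eq_add_of_mem_Ioo hz
  have h := fun k => pow_succ_le_pow_mul_of_le hu0.le hu.le k
  unfold phiDeriv2Num phiDerivNum phiNum phiNum' phiNum'' phiDen phiDen' phiDen''
  linarith [h 1, h 2, h 3, h 4, h 5, h 6, h 7, h 8, h 9, h 10, h 11, h 12, h 13, h 14, h 15,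
    h 16, h 17, h 18, h 19, pow_pos hu0 2, pow_pos hu0 3, pow_pos hu0 4, pow_pos hu0 5,
    pow_pos hu0 6, pow_pos hu0 7, pow_pos hu0 8, pow_pos hu0 9, pow_pos hu0 10, pow_pos hu0 11,
    pow_pos hu0 12, pow_pos hu0 13, pow_pos hu0 14, pow_pos hu0 15, pow_pos hu0 16,
    pow_pos hu0 17, pow_pos hu0 18, pow_pos hu0 19, pow_pos hu0 20]

/-- If `τ ∈ (0.122, 0.123)` satisfies `φ(τ) = τ·φ'(τ)` for
`φ(z) = -4(z-1)⁶/(2z⁷ - 18z⁶ + 67z⁵ - 126z⁴ + 124z³ - 70z² + 30z - 4)`, then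
`φ''(τ) > 0` and the constant `c = √(φ(τ)/φ''(τ))` satisfies `0.066 < c < 0.067`. -/
theorem leading_constant_bounds (φ : ℝ → ℝ)
    (hφ : ∀ z : ℝ, φ z = (-4*(z-1)^6) /
      (2*z^7 - 18*z^6 + 67*z^5 - 126*z^4 + 124*z^3 - 70*z^2 + 30*z - 4))
    (τ : ℝ) (hτ : τ ∈ Set.Ioo (0.122 : ℝ) 0.123)
    (hroot : φ τ = τ * deriv φ τ) :
    0 < deriv (deriv φ) τ ∧
      0.066 < Real.sqrt (φ τ / deriv (deriv φ) τ) ∧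
      Real.sqrt (φ τ / deriv (deriv φ) τ) < 0.067 := by
  obtain rfl : φ = fun z => phiNum z / phiDen z := funext hφ
  beta_reduce at hroot ⊢
  have hQ : phiDen τ < 0 := phiDen_neg hτ
  have hB : phiDeriv2Num τ < 0 := phiDeriv2Num_neg hτ
  have hφ'' : deriv (deriv fun z => phiNum z / phiDen z) τ = phiDeriv2Num τ / phiDen τ ^ 3 :=
    deriv_deriv_div hasDerivAt_phiNum hasDerivAt_phiDen (hasDerivAt_phiNum' τ)
      (hasDerivAt_phiDen' τ) hQ.ne
  have hroot' : τ * phiDerivNum τ = phiNum τ * phiDen τ := by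
    rw [((hasDerivAt_phiNum τ).fun_div (hasDerivAt_phiDen τ) hQ.ne).deriv] at hroot
    field_simp [hQ.ne] at hroot
    unfold phiDerivNum
    linear_combination -hroot
  have hτ' : τ ∈ Ioo 0.1225 0.123 :=
    ⟨lt_of_lt_of_le (by norm_num) (not_lt.1 fun h => (phiDerivNum_mul_lt ⟨hτ.1, h⟩).ne hroot'),
      hτ.2⟩
  have hratio : phiNum τ / phiDen τ / deriv (deriv fun z => phiNum z / phiDen z) τ =
      phiNum τ * phiDen τ ^ 2 / phiDeriv2Num τ := by
    rw [hφ'']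
    field_simp
  refine ⟨hφ'' ▸ div_pos_of_neg_of_neg hB (Odd.pow_neg (by decide) hQ), ?_, ?_⟩
  · rw [Real.lt_sqrt (by norm_num), hratio, lt_div_iff_of_neg hB]
    exact phiNum_mul_phiDen_sq_lt hτ
  · rw [Real.sqrt_lt' (by norm_num), hratio, div_lt_iff_of_neg hB]
    exact lt_phiNum_mul_phiDen_sq hτ'
end
end

section
/- The function h(z) = φ(z) - z·φ'(z), where φ(z) = -4(z-1)⁶/(2z⁷ - 18z⁶ + 67z⁵ - 126z⁴ + 124z³ - 70z² + 30z - 4), is strictly decreasing on the interval (0, 0.13), and hence has at most one zero there. -/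
/-!
With `φ = N / D`, the function `h = φ - z φ'` has derivative `h' = -z φ''`, and applying the
quotient rule twice gives `φ'' = S / (-D)³` for an explicit polynomial `S` of degree 18. On
`(0, 0.13)` both `-D` and `S` are positive: their constant terms dominate once each monomial of
the wrong sign is bounded through `z < 0.13`. Hence `h' < 0`.
-/

open Set Filter Topology

section SecondQuotientRule

variable {𝕜 : Type*} [NontriviallyNormedField 𝕜]

theorem hasDerivAt_sub_mul_deriv {φ : 𝕜 → 𝕜} {x φ'' : 𝕜} (hφ : DifferentiableAt 𝕜 φ x)
    (hφ' : HasDerivAt (deriv φ) φ'' x) :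
    HasDerivAt (fun y => φ y - y * deriv φ y) (-(x * φ'')) x :=
  (hφ.hasDerivAt.sub ((hasDerivAt_id' x).mul hφ')).congr_deriv (by ring)

theorem hasDerivAt_deriv_div {n n' d d' : 𝕜 → 𝕜} {x n'' d'' : 𝕜}
    (hn : ∀ᶠ y in 𝓝 x, HasDerivAt n (n' y) y) (hd : ∀ᶠ y in 𝓝 x, HasDerivAt d (d' y) y)
    (hn' : HasDerivAt n' n'' x) (hd' : HasDerivAt d' d'' x) (hx : d x ≠ 0) :
    HasDerivAt (deriv fun y => n y / d y)
      (((n'' * d x - n x * d'') * d x - 2 * d' x * (n' x * d x - n x * d' x)) / d x ^ 3) x := by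
  have hd_ne : ∀ᶠ y in 𝓝 x, d y ≠ 0 := hd.self_of_nhds.continuousAt.eventually_ne hx
  have hderiv : (deriv fun y => n y / d y) =ᶠ[𝓝 x]
      fun y => (n' y * d y - n y * d' y) / d y ^ 2 := by
    filter_upwards [hn, hd, hd_ne] with y hny hdy hy
    exact (hny.div hdy hy).deriv
  refine HasDerivAt.congr_of_eventuallyEq ?_ hderiv
  refine (((hn'.mul hd.self_of_nhds).sub (hn.self_of_nhds.mul hd')).div
    (hd.self_of_nhds.pow 2) (pow_ne_zero 2 hx)).congr_deriv ?_
  simp only [Pi.mul_apply, Pi.sub_apply, Pi.pow_apply]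
  field_simp
  ring

end SecondQuotientRule

namespace RationalPhi

def num (z : ℝ) : ℝ := -4 * (z - 1) ^ 6

def num' (z : ℝ) : ℝ := -24 * (z - 1) ^ 5

def den (z : ℝ) : ℝ :=
  2*z^7 - 18*z^6 + 67*z^5 - 126*z^4 + 124*z^3 - 70*z^2 + 30*z - 4

def den' (z : ℝ) : ℝ :=
  14*z^6 - 108*z^5 + 335*z^4 - 504*z^3 + 372*z^2 - 140*z + 30

def secondDerivNum (z : ℝ) : ℝ :=
  1120 - 5856*z + 8160*z^2 + 37280*z^3 - 150912*z^4 + 42096*z^5 + 879648*z^6 - 2679216*z^7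
    + 4343544*z^8 - 4700512*z^9 + 3670944*z^10 - 2155200*z^11 + 981672*z^12 - 358416*z^13
    + 107664*z^14 - 26320*z^15 + 4848*z^16 - 576*z^17 + 32*z^18

theorem hasDerivAt_num (z : ℝ) : HasDerivAt num (num' z) z := by
  have hderiv : deriv num z = num' z := by
    unfold num num'
    simp (disch := fun_prop)
    ring
  exact hderiv ▸ (by unfold num; fun_prop : DifferentiableAt ℝ num z).hasDerivAt

theorem hasDerivAt_num' (z : ℝ) : HasDerivAt num' (-120 * (z - 1) ^ 4) z := by
  have hderiv : deriv num' z = -120 * (z - 1) ^ 4 := by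
    unfold num'
    simp (disch := fun_prop)
    ring
  exact hderiv ▸ (by unfold num'; fun_prop : DifferentiableAt ℝ num' z).hasDerivAt

theorem hasDerivAt_den (z : ℝ) : HasDerivAt den (den' z) z := by
  have hderiv : deriv den z = den' z := by
    unfold den den'
    simp (disch := fun_prop)
    ring
  exact hderiv ▸ (by unfold den; fun_prop : DifferentiableAt ℝ den z).hasDerivAt

theorem hasDerivAt_den' (z : ℝ) :
    HasDerivAt den' (84*z^5 - 540*z^4 + 1340*z^3 - 1512*z^2 + 744*z - 140) z := by
  have hderiv : deriv den' z = 84*z^5 - 540*z^4 + 1340*z^3 - 1512*z^2 + 744*z - 140 := by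
    unfold den'
    simp (disch := fun_prop)
    ring
  exact hderiv ▸ (by unfold den'; fun_prop : DifferentiableAt ℝ den' z).hasDerivAt

theorem hasDerivAt_deriv_num_div_den {x : ℝ} (hx : den x ≠ 0) :
    HasDerivAt (deriv fun y => num y / den y) (secondDerivNum x / (-den x) ^ 3) x := by
  refine (hasDerivAt_deriv_div (Eventually.of_forall hasDerivAt_num)
    (Eventually.of_forall hasDerivAt_den) (hasDerivAt_num' x) (hasDerivAt_den' x) hx).congr_deriv ?_
  unfold num num' den den' secondDerivNum
  field_simp
  ring

theorem den_neg {z : ℝ} (hz : z ∈ Ioo (0 : ℝ) 0.13) : den z < 0 := by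
  obtain ⟨hz0, hz1⟩ := hz
  have h3 : z^3 ≤ 0.13 * z^2 := by nlinarith [pow_pos hz0 2]
  have h5 : z^5 ≤ 0.13 * z^4 := by nlinarith [pow_pos hz0 4]
  have h7 : z^7 ≤ 0.13 * z^6 := by nlinarith [pow_pos hz0 6]
  unfold den
  linarith [pow_pos hz0 2, pow_pos hz0 4, pow_pos hz0 6]

theorem secondDerivNum_pos {z : ℝ} (hz : z ∈ Ioo (0 : ℝ) 0.13) : 0 < secondDerivNum z := by
  obtain ⟨hz0, hz1⟩ := hz
  have upper (k : ℕ) : z^k ≤ 0.13^k := pow_le_pow_left₀ hz0.le hz1.le k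
  have nonneg (k : ℕ) : 0 ≤ z^k := pow_nonneg hz0.le k
  unfold secondDerivNum
  linarith [upper 4, upper 7, upper 9, upper 11, upper 13, upper 15, upper 17, nonneg 2,
    nonneg 3, nonneg 5, nonneg 6, nonneg 8, nonneg 10, nonneg 12, nonneg 14, nonneg 16, nonneg 18]

end RationalPhi

open RationalPhi

/-- The function `h(z) = φ(z) - z·φ'(z)`, where
`φ(z) = -4(z-1)⁶/(2z⁷ - 18z⁶ + 67z⁵ - 126z⁴ + 124z³ - 70z² + 30z - 4)`, is
strictly decreasing on `(0, 0.13)`, and hence has at most one zero there. -/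
theorem h_strictAnti_and_unique_zero (φ h : ℝ → ℝ)
    (hφ : ∀ z : ℝ, φ z = (-4*(z-1)^6) /
      (2*z^7 - 18*z^6 + 67*z^5 - 126*z^4 + 124*z^3 - 70*z^2 + 30*z - 4))
    (hh : ∀ z : ℝ, h z = φ z - z * deriv φ z) :
    StrictAntiOn h (Set.Ioo (0 : ℝ) 0.13) ∧
      ∀ a ∈ Set.Ioo (0 : ℝ) 0.13, ∀ b ∈ Set.Ioo (0 : ℝ) 0.13,
        h a = 0 → h b = 0 → a = b := by
  have hderiv (x : ℝ) (hx : x ∈ Ioo (0 : ℝ) 0.13) :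
      HasDerivAt h (-(x * (secondDerivNum x / (-den x) ^ 3))) x := by
    rw [funext hh, funext hφ]
    have hφ_diff := ((hasDerivAt_num x).div (hasDerivAt_den x) (den_neg hx).ne).differentiableAt
    exact hasDerivAt_sub_mul_deriv hφ_diff (hasDerivAt_deriv_num_div_den (den_neg hx).ne)
  have hanti : StrictAntiOn h (Ioo 0 0.13) := by
    refine strictAntiOn_of_deriv_neg (convex_Ioo 0 0.13)
      (fun x hx => (hderiv x hx).continuousAt.continuousWithinAt) ?_
    rw [interior_Ioo]
    intro x hx
    rw [(hderiv x hx).deriv]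
    exact neg_neg_of_pos (mul_pos hx.1
      (div_pos (secondDerivNum_pos hx) (pow_pos (neg_pos.mpr (den_neg hx)) 3)))
  exact ⟨hanti, fun a ha b hb ha0 hb0 => hanti.injOn ha hb (ha0.trans hb0.symm)⟩
end
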